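/- Let P be a finite p-group, and let g be an automorphism of P whose order is coprime to p. Then the subgroup [P, g] is contained in the subgroup generated by the minimal Engel sink of g in the semidirect product P ⋊ ⟨g⟩. -/

import Mathlib

/-!
For `a ∈ P` the Engel commutator `[a, g]` computed in `P ⋊ ⟨g⟩` is `a⁻¹ * g⁻¹ a`, so the Engel
sink of `g` contains the eventual range `⋂ₙ range Tⁿ` of `T a = a⁻¹ * h a` with `h = g⁻¹`;
moreover `[P, g] = [P, h]`.

Coprime action gives `P = C_P(h) [P, h]`: on an abelian `p`-group this follows from the norm map
`N u = ∏_{i < |h|} hⁱ u`, since `u ^ |h| / N u ∈ [A, h]`, `N u` is fixed, and `u ↦ u ^ |h|` is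
bijective; the general case follows by induction, passing to the quotient by the centre.
Hence `V = [P, h]` satisfies `[V, h] = V`. On the abelianization of `V` the map `T` is then a
surjective endomorphism, so the eventual range of `T` on `V` maps onto `V / V'`, and in a
nilpotent group a subgroup which together with the derived subgroup generates the group is the
whole group.
-/

/-- Left-normed iterated commutator `[x, g, g, …, g]` (with `g` repeated `n` times),
where `[x, g] = x⁻¹ g⁻¹ x g`. -/
def engel {G : Type*} [Group G] (g : G) : ℕ → G → G
  | 0, x => x
  | n + 1, x => (engel g n x)⁻¹ * g⁻¹ * engel g n x * g

/-- The minimal Engel sink of `g` in a finite group: the set of values attained by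
`[x, g, …, g]` for arbitrarily large lengths. -/
def engelSink {G : Type*} [Group G] (g : G) : Set G :=
  {y | ∀ N : ℕ, ∃ n, N ≤ n ∧ ∃ x : G, engel g n x = y}

/-- `[P, g]` for an automorphism `g` of `P`. -/
def autComm {G : Type*} [Group G] (g : MulAut G) : Subgroup G :=
  Subgroup.closure {y | ∃ x : G, x⁻¹ * g x = y}

open Function

namespace Function

open Set

variable {α β : Type*}

def eventualRange (f : α → α) : Set α := ⋂ n, range f^[n]

theorem antitone_range_iterate (f : α → α) : Antitone fun n => range f^[n] :=
  antitone_nat_of_succ_le fun n => by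
    rw [iterate_succ]
    exact range_comp_subset_range _ _

theorem exists_eventualRange_eq_range_iterate [Finite α] (f : α → α) :
    ∃ N, eventualRange f = range f^[N] := by
  obtain ⟨N, hN⟩ := WellFoundedLT.antitone_chain_condition (antitone_range_iterate f)
  refine ⟨N, (iInter_subset _ N).antisymm fun y hy => mem_iInter.2 fun n => ?_⟩
  rcases le_total n N with hnN | hNn
  · exact antitone_range_iterate f hnN hy
  · exact hN n hNn ▸ hy

theorem Surjective.eventualRange_eq_univ {f : α → α} (hf : Surjective f) :
    eventualRange f = univ :=
  eq_univ_of_forall fun y => mem_iInter.2 fun n => (hf.iterate n).range_eq ▸ mem_univ y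

variable {π : α → β} {f : α → α} {g : β → β}

theorem Semiconj.image_eventualRange_subset (h : Semiconj π f g) :
    π '' eventualRange f ⊆ eventualRange g := by
  rintro - ⟨y, hy, rfl⟩
  refine mem_iInter.2 fun n => ?_
  obtain ⟨x, rfl⟩ := mem_iInter.1 hy n
  exact ⟨π x, (h.iterate_right n x).symm⟩

theorem Semiconj.eventualRange_subset_image [Finite α] (hπ : Surjective π) (h : Semiconj π f g) :
    eventualRange g ⊆ π '' eventualRange f := by
  obtain ⟨N, hN⟩ := exists_eventualRange_eq_range_iterate f
  intro y hy
  obtain ⟨x, rfl⟩ := mem_iInter.1 hy N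
  obtain ⟨x, rfl⟩ := hπ x
  exact ⟨f^[N] x, hN ▸ mem_range_self x, h.iterate_right N x⟩

end Function

open Subgroup Finset

section AutCommutator

variable {G H : Type*} [Group G] [Group H]

def autCommutator (h : MulAut G) (x : G) : G := x⁻¹ * h x

theorem autComm_eq_closure_range (h : MulAut G) :
    autComm h = closure (Set.range (autCommutator h)) := rfl

theorem autCommutator_mem_autComm (h : MulAut G) (x : G) : autCommutator h x ∈ autComm h :=
  subset_closure ⟨x, rfl⟩

theorem semiconj_autCommutator {f : G →* H} {h : MulAut G} {h' : MulAut H}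
    (hf : ∀ x, f (h x) = h' (f x)) : Semiconj f (autCommutator h) (autCommutator h') := fun x => by
  simp [autCommutator, hf]

theorem map_autComm {f : G →* H} (hf_surj : Surjective f) {h : MulAut G} {h' : MulAut H}
    (hf : ∀ x, f (h x) = h' (f x)) : (autComm h).map f = autComm h' := by
  rw [autComm_eq_closure_range, autComm_eq_closure_range, MonoidHom.map_closure, ← Set.range_comp,
    (semiconj_autCommutator hf).comp_eq, Set.range_comp, hf_surj.range_eq, Set.image_univ]

theorem autComm_inv (h : MulAut G) : autComm h⁻¹ = autComm h := by
  suffices ∀ h : MulAut G, autComm h ≤ autComm h⁻¹ from (this h⁻¹).antisymm (inv_inv h ▸ this h)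
  intro h
  refine (closure_le _).2 ?_
  rintro - ⟨x, rfl⟩
  have : x⁻¹ * h x = (autCommutator h⁻¹ (h x))⁻¹ := by
    simp [autCommutator]
  exact this ▸ inv_mem (autCommutator_mem_autComm _ _)

theorem inv_mul_pow_apply_mem_autComm (h : MulAut G) (x : G) (n : ℕ) :
    x⁻¹ * (h ^ n) x ∈ autComm h := by
  induction n with
  | zero => simp
  | succ n ih =>
    have : x⁻¹ * (h ^ (n + 1)) x = x⁻¹ * (h ^ n) x * autCommutator h ((h ^ n) x) := by
      simp [autCommutator, pow_succ', mul_assoc]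
    exact this ▸ mul_mem ih (autCommutator_mem_autComm _ _)

end AutCommutator

section CommGroup

variable {A : Type*} [CommGroup A] (f : MulAut A)

def autCommutatorHom : A →* A where
  toFun := autCommutator f
  map_one' := by simp [autCommutator]
  map_mul' x y := by
    simp only [autCommutator, map_mul, mul_inv_rev, mul_comm y⁻¹ x⁻¹]
    exact mul_mul_mul_comm _ _ _ _

theorem mem_autComm_iff {v : A} : v ∈ autComm f ↔ ∃ w, autCommutator f w = v := by
  change v ∈ closure (Set.range (autCommutatorHom f)) ↔ _
  rw [← MonoidHom.coe_range, closure_eq]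
  rfl

def autNorm (n : ℕ) (u : A) : A := ∏ i ∈ range n, (f ^ i) u

variable {f} {n : ℕ}

theorem apply_autNorm (hf : f ^ n = 1) (u : A) : f (autNorm f n u) = autNorm f n u := by
  have shift := prod_range_succ' (fun i => (f ^ i) u) n
  rw [prod_range_succ, hf, pow_zero] at shift
  simpa [autNorm, map_prod, pow_succ'] using (mul_right_cancel shift).symm

theorem autNorm_pow (u : A) (k : ℕ) : autNorm f n (u ^ k) = autNorm f n u ^ k := by
  simp [autNorm, Finset.prod_pow]

theorem autNorm_succ (u : A) : autNorm f (n + 1) u = u * f (autNorm f n u) := by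
  simp [autNorm, prod_range_succ', map_prod, pow_succ', mul_comm]

theorem pow_div_autNorm_mem_autComm (u : A) : u ^ n / autNorm f n u ∈ autComm f := by
  have hpow : u ^ n = ∏ _i ∈ range n, u := by simp
  rw [hpow, autNorm, ← prod_div_distrib]
  refine prod_mem fun i _ => ?_
  simpa [div_eq_mul_inv, mul_comm] using inv_mem (inv_mul_pow_apply_mem_autComm f u i)

variable {p : ℕ} (hA : IsPGroup p A) (hn : n.Coprime p)
include hA hn

theorem exists_fixed_mul_autCommutator (hf : f ^ n = 1) (u : A) :
    ∃ c w, f c = c ∧ u = c * autCommutator f w := by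
  obtain ⟨y, rfl⟩ := (hA.powEquiv hn.symm).surjective u
  obtain ⟨w, hw⟩ := (mem_autComm_iff f).1 (pow_div_autNorm_mem_autComm (f := f) (n := n) y)
  exact ⟨autNorm f n y, w, apply_autNorm hf y, by simp [hw]⟩

theorem exists_autCommutator_eq_of_autNorm_eq_one {t : A} (ht : autNorm f n t = 1) :
    ∃ w, autCommutator f w = t := by
  obtain ⟨y, rfl⟩ := (hA.powEquiv hn.symm).surjective t
  have hy : autNorm f n y = 1 :=
    (hA.powEquiv hn.symm).injective (by simpa [autNorm_pow] using ht)
  simpa [hy] using (mem_autComm_iff f).1 (pow_div_autNorm_mem_autComm (f := f) (n := n) y)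

end CommGroup

section Center

open scoped IsMulCommutative

variable {G : Type*} [Group G]

theorem inv_mul_pow_apply_eq_autNorm (h : MulAut G) {x : G} (hx : autCommutator h x ∈ center G)
    (n : ℕ) :
    x⁻¹ * (h ^ n) x = autNorm (MulAut.characteristic (center G) h) n ⟨_, hx⟩ := by
  induction n with
  | zero => simp [autNorm]
  | succ n ih =>
    rw [autNorm_succ, Subgroup.coe_mul]
    change _ = autCommutator h x *
      h ((autNorm (MulAut.characteristic (center G) h) n ⟨_, hx⟩ : center G) : G)
    rw [← ih]
    simp [autCommutator, pow_succ', mul_assoc]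

theorem exists_fixed_mul_autCommutator_of_mem_center {p : ℕ} (hG : IsPGroup p G) (h : MulAut G)
    (hh : (orderOf h).Coprime p) {x : G} (hx : autCommutator h x ∈ center G) :
    ∃ c w, h c = c ∧ x = c * autCommutator h w := by
  set f := MulAut.characteristic (center G) h
  have hZ := hG.to_subgroup (center G)
  have hf : f ^ orderOf h = 1 := by rw [← map_pow, pow_orderOf_eq_one, map_one]
  have hnorm : autNorm f (orderOf h) ⟨_, hx⟩ = 1 := by
    ext
    rw [← inv_mul_pow_apply_eq_autNorm h hx, pow_orderOf_eq_one]
    simp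
  -- a central `z` with the same commutator as `x` makes `x * z⁻¹` fixed
  obtain ⟨z, hz⟩ := exists_autCommutator_eq_of_autNorm_eq_one hZ hh hnorm
  obtain ⟨c, w, hc, hzcw⟩ := exists_fixed_mul_autCommutator hZ hh hf z
  have hhz : h z = z * (x⁻¹ * h x) := by
    have hz' : (z : G)⁻¹ * h z = x⁻¹ * h x := congrArg Subtype.val hz
    rw [← hz', mul_inv_cancel_left]
  have hhc : h c = c := congrArg Subtype.val hc
  have hzcw' : (z : G) = c * autCommutator h w := congrArg Subtype.val hzcw
  refine ⟨x * (z : G)⁻¹ * c, w, ?_, ?_⟩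
  · rw [map_mul, map_mul, map_inv, hhz, hhc]
    group
  · rw [hzcw']
    group

end Center

section Nilpotent

variable {G : Type*} [Group G]

def MulAut.quotientCharacteristic (N : Subgroup G) [N.Characteristic] :
    MulAut G →* MulAut (G ⧸ N) where
  toFun h := QuotientGroup.congr N N h (characteristic_iff_map_eq.mp ‹_› h)
  map_one' := by
    ext x
    induction x using QuotientGroup.induction_on
    rfl
  map_mul' h k := by
    ext x
    induction x using QuotientGroup.induction_on
    rfl

theorem exists_fixed_mul_mem_autComm [Group.IsNilpotent G] {p : ℕ} (hG : IsPGroup p G)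
    (h : MulAut G) (hh : (orderOf h).Coprime p) (x : G) :
    ∃ c v, h c = c ∧ v ∈ autComm h ∧ x = c * v := by
  refine Group.nilpotent_center_quotient_ind (P := fun G _ _ => IsPGroup p G → ∀ h : MulAut G,
    (orderOf h).Coprime p → ∀ x : G, ∃ c v, h c = c ∧ v ∈ autComm h ∧ x = c * v) G ?_ ?_ hG h hh x
  · intro G _ _ _ h _ x
    exact ⟨1, 1, map_one h, one_mem _, Subsingleton.elim _ _⟩
  · intro G _ _ ih hG h hh x
    let π := QuotientGroup.mk' (center G)
    let h' := MulAut.quotientCharacteristic (center G) h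
    have hπ : ∀ y, π (h y) = h' (π y) := fun _ => rfl
    obtain ⟨c', v', hc', hv', hx⟩ :=
      ih (hG.to_quotient _) h' (hh.coprime_dvd_left (orderOf_map_dvd _ h)) (π x)
    rw [← map_autComm (QuotientGroup.mk'_surjective _) hπ] at hv'
    obtain ⟨v, hv, rfl⟩ := hv'
    have hxv : π (x * v⁻¹) = c' := by
      rw [map_mul, map_inv, hx, mul_inv_cancel_right]
    have hcenter : autCommutator h (x * v⁻¹) ∈ center G := by
      rw [← QuotientGroup.ker_mk' (center G), MonoidHom.mem_ker,
        (semiconj_autCommutator hπ) (x * v⁻¹), hxv, autCommutator, hc', inv_mul_cancel]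
    obtain ⟨c, w, hc, hcw⟩ := exists_fixed_mul_autCommutator_of_mem_center hG h hh hcenter
    refine ⟨c, autCommutator h w * v, hc, mul_mem (autCommutator_mem_autComm h w) hv, ?_⟩
    rw [← mul_assoc, ← hcw, inv_mul_cancel_right]

theorem Subgroup.eq_top_of_sup_commutator_eq_top [Group.IsNilpotent G] {H : Subgroup G}
    (hH : H ⊔ _root_.commutator G = ⊤) : H = ⊤ := by
  refine Group.nilpotent_center_quotient_ind
    (P := fun G _ _ => ∀ H : Subgroup G, H ⊔ _root_.commutator G = ⊤ → H = ⊤) G ?_ ?_ H hH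
  · exact fun G _ _ _ _ => Subsingleton.elim _ _
  · intro G _ _ ih H hH
    let π := QuotientGroup.mk' (center G)
    have hπ : Surjective π := QuotientGroup.mk'_surjective _
    have hmap : H.map π = ⊤ := ih _ <| by
      rw [← map_top_of_surjective π hπ, ← hH, map_sup, map_commutator_eq,
        MonoidHom.range_eq_top.2 hπ, _root_.commutator_def]
    have hHZ : H ⊔ center G = ⊤ := by
      rw [← QuotientGroup.ker_mk' (center G), ← top_sup_eq (π.ker), ← map_eq_map_iff, hmap,
        map_top_of_surjective π hπ]
    have : H.Normal := normalizer_eq_top_iff.mp <|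
      top_le_iff.mp (hHZ ▸ sup_le le_normalizer (center_le_normalizer _))
    rw [← hH, eq_comm, sup_eq_left]
    exact Normal.commutator_le_of_self_sup_commutative_eq_top hHZ (center.isMulCommutative G)

end Nilpotent

section Sink

variable {G : Type*} [Group G]

theorem closure_eventualRange_autCommutator_eq_top [Finite G] [Group.IsNilpotent G]
    {h : MulAut G} (hh : autComm h = ⊤) : closure (eventualRange (autCommutator h)) = ⊤ := by
  let h' := MulEquiv.abelianizationCongr h
  have hπ : ∀ x, Abelianization.of (h x) = h' (Abelianization.of x) := fun _ => rfl
  have hsurj : Surjective (Abelianization.of : G →* Abelianization G) :=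
    QuotientGroup.mk'_surjective _
  have hh' : Surjective (autCommutator h') := fun y =>
    (mem_autComm_iff h').1 <| by
      rw [← map_autComm hsurj hπ, hh, map_top_of_surjective _ hsurj]
      exact mem_top y
  have himage : Abelianization.of '' eventualRange (autCommutator h) = Set.univ :=
    Set.eq_univ_of_univ_subset <| hh'.eventualRange_eq_univ ▸
      (semiconj_autCommutator hπ).eventualRange_subset_image hsurj
  apply eq_top_of_sup_commutator_eq_top
  rw [← Abelianization.ker_of, ← top_sup_eq (Abelianization.of.ker), ← map_eq_map_iff,
    MonoidHom.map_closure, himage, Subgroup.closure_univ, map_top_of_surjective _ hsurj]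

def MulAut.restrict (h : MulAut G) {K : Subgroup G} (hK : K.map (h : G →* G) = K) : MulAut K :=
  (h.subgroupMap K).trans (MulEquiv.subgroupCongr hK)

theorem autCommutator_mul_of_apply_eq (h : MulAut G) {c : G} (hc : h c = c) (v : G) :
    autCommutator h (c * v) = autCommutator h v := by
  simp [autCommutator, hc, mul_assoc]

theorem map_autComm_self (h : MulAut G) : (autComm h).map (h : G →* G) = autComm h :=
  map_autComm h.surjective fun _ => rfl

theorem autComm_restrict_autComm [Group.IsNilpotent G] {p : ℕ} (hG : IsPGroup p G)
    (h : MulAut G) (hh : (orderOf h).Coprime p) :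
    autComm (h.restrict (map_autComm_self h)) = ⊤ := by
  let V := autComm h
  have hle : V ≤ (autComm (h.restrict (map_autComm_self h))).map V.subtype := by
    refine (closure_le _).2 ?_
    rintro - ⟨x, rfl⟩
    obtain ⟨c, v, hc, hv, rfl⟩ := exists_fixed_mul_mem_autComm hG h hh x
    exact ⟨autCommutator _ ⟨v, hv⟩, autCommutator_mem_autComm _ _,
      (autCommutator_mul_of_apply_eq h hc v).symm⟩
  rwa [eq_top_iff, ← map_le_map_iff_of_injective V.subtype_injective, ← MonoidHom.range_eq_map,
    range_subtype]

theorem autComm_le_closure_eventualRange [Finite G] [Group.IsNilpotent G] {p : ℕ}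
    (hG : IsPGroup p G) (h : MulAut G) (hh : (orderOf h).Coprime p) :
    autComm h ≤ closure (eventualRange (autCommutator h)) := by
  let V := autComm h
  let hV := h.restrict (map_autComm_self h)
  have hsemi : Semiconj V.subtype (autCommutator hV) (autCommutator h) :=
    semiconj_autCommutator fun _ => rfl
  calc V = (closure (eventualRange (autCommutator hV))).map V.subtype := by
        rw [closure_eventualRange_autCommutator_eq_top (autComm_restrict_autComm hG h hh),
          ← MonoidHom.range_eq_map, range_subtype]
    _ = closure (V.subtype '' eventualRange (autCommutator hV)) := MonoidHom.map_closure _ _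
    _ ≤ closure (eventualRange (autCommutator h)) := closure_mono hsemi.image_eventualRange_subset

end Sink

section SemidirectProduct

open SemidirectProduct

variable {N K : Type*} [Group N] [Group K] (φ : K →* MulAut N) (k : K)

theorem engel_inr_inl (n : ℕ) (a : N) :
    engel (inr k : N ⋊[φ] K) n (inl a) = inl ((autCommutator (φ k)⁻¹)^[n] a) := by
  induction n with
  | zero => rfl
  | succ n ih =>
    rw [engel, ih, iterate_succ_apply', autCommutator, map_mul, map_inv, inl_aut_inv, map_inv]
    group

theorem image_inl_eventualRange_subset_engelSink :
    inl '' eventualRange (autCommutator (φ k)⁻¹) ⊆ engelSink (inr k : N ⋊[φ] K) := by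
  rintro - ⟨a, ha, rfl⟩ n
  obtain ⟨x, rfl⟩ := Set.mem_iInter.1 ha n
  exact ⟨n, le_rfl, inl x, engel_inr_inl φ k n x⟩

end SemidirectProduct

/-- If `P` is a finite `p`-group and `g` an automorphism of `P` of order coprime to `p`,
then `[P, g]` is contained in the subgroup generated by the minimal Engel sink of `g`
in the semidirect product `P ⋊ ⟨g⟩`. -/
theorem stmt1 (p : ℕ) (hp : p.Prime) (P : Type) [Group P] [Fintype P]
    (hP : IsPGroup p P) (g : MulAut P) (hg : Nat.Coprime (orderOf g) p) :
    (autComm g).map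
        (SemidirectProduct.inl :
          P →* P ⋊[(Subgroup.zpowers g).subtype] ↥(Subgroup.zpowers g)) ≤
      Subgroup.closure
        (engelSink (SemidirectProduct.inr ⟨g, Subgroup.mem_zpowers g⟩)) := by
  have := Fact.mk hp
  have := hP.isNilpotent
  have hsink : autComm g ≤ closure (eventualRange (autCommutator g⁻¹)) := by
    rw [← autComm_inv]
    exact autComm_le_closure_eventualRange hP g⁻¹ (by rwa [orderOf_inv])
  refine (map_mono hsink).trans ?_
  rw [MonoidHom.map_closure]
  exact closure_mono <|
    image_inl_eventualRange_subset_engelSink (zpowers g).subtype ⟨g, mem_zpowers g⟩
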